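/- arXiv:1705.04369 — 2 statements merged into one kernel-verified Lean document; each statement's English description precedes it below -/
import Mathlib

section
/- Let ν, ν_h ∈ ℝ³ be unit vectors with ν_h·ν ≠ 0, H a symmetric 3×3 real matrix with H ν = 0, and d ∈ ℝ such that I − d·H is invertible. With P = I − ν νᵀ, it holds that (I − d H) P (I − d H)⁻¹ (I − (ν_h νᵀ)/(ν_h·ν)) = I − (ν_h νᵀ)/(ν_h·ν). -/
/-!
Since `H ν = 0` and `H` is symmetric, `νᵀ H = 0` as well, so `A = I - d H` commutes with
`ν νᵀ` and hence with `P`; the conjugation `A P A⁻¹` therefore collapses to `P`. Finally the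
oblique projector `Q = I - ν_h νᵀ / (ν_h · ν)` has range `ker νᵀ`, on which `P` is the identity,
so `P Q = Q`.
-/

open Matrix

section

variable {n R : Type*} [Fintype n] [CommRing R]

lemma commute_vecMulVec_of_mulVec_eq_zero_of_vecMul_eq_zero {H : Matrix n n R} {u v : n → R}
    (hu : H *ᵥ u = 0) (hv : v ᵥ* H = 0) : Commute H (vecMulVec u v) := by
  rw [Commute, SemiconjBy, mul_vecMulVec, vecMulVec_mul, hu, hv, zero_vecMulVec, vecMulVec_zero]

lemma one_sub_vecMulVec_mul_one_sub_smul_vecMulVec [DecidableEq n] {u v w : n → R} {c : R}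
    (hc : c * (v ⬝ᵥ w) = 1) :
    (1 - vecMulVec u v) * (1 - c • vecMulVec w v) = 1 - c • vecMulVec w v := by
  rw [sub_mul, one_mul, mul_sub, mul_one, Matrix.mul_smul, vecMulVec_mul_vecMulVec,
    ← vecMulVec_smul c u, smul_smul, hc, one_smul]
  abel

end

theorem stmt_3_general (ν νh : Fin 3 → ℝ)
    (hdot : νh ⬝ᵥ ν ≠ 0)
    (H : Matrix (Fin 3) (Fin 3) ℝ) (hH : H.IsSymm) (hHν : H.mulVec ν = 0)
    (d : ℝ) (hinv : IsUnit (1 - d • H))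
    (P : Matrix (Fin 3) (Fin 3) ℝ) (hP : P = 1 - vecMulVec ν ν) :
    (1 - d • H) * P * (1 - d • H)⁻¹ * (1 - (νh ⬝ᵥ ν)⁻¹ • vecMulVec νh ν)
      = 1 - (νh ⬝ᵥ ν)⁻¹ • vecMulVec νh ν := by
  have hνH : ν ᵥ* H = 0 := by rw [← mulVec_transpose, hH.eq, hHν]
  have hH_comm : Commute H (vecMulVec ν ν) :=
    commute_vecMulVec_of_mulVec_eq_zero_of_vecMul_eq_zero hHν hνH
  have hA_comm : Commute (1 - d • H) P := by
    rw [hP]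
    exact (Commute.one_right _).sub_right ((Commute.one_left _).sub_left (hH_comm.smul_left d))
  rw [hA_comm.eq, mul_nonsing_inv_cancel_right _ _ ((isUnit_iff_isUnit_det _).mp hinv), hP]
  exact one_sub_vecMulVec_mul_one_sub_smul_vecMulVec
    (by rw [dotProduct_comm ν]; exact inv_mul_cancel₀ hdot)

theorem stmt_3 (ν νh : Fin 3 → ℝ) (hν : ν ⬝ᵥ ν = 1) (hνh : νh ⬝ᵥ νh = 1)
    (hdot : νh ⬝ᵥ ν ≠ 0)
    (H : Matrix (Fin 3) (Fin 3) ℝ) (hH : H.IsSymm) (hHν : H.mulVec ν = 0)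
    (d : ℝ) (hinv : IsUnit (1 - d • H))
    (P : Matrix (Fin 3) (Fin 3) ℝ) (hP : P = 1 - vecMulVec ν ν) :
    (1 - d • H) * P * (1 - d • H)⁻¹ * (1 - (νh ⬝ᵥ ν)⁻¹ • vecMulVec νh ν)
      = 1 - (νh ⬝ᵥ ν)⁻¹ • vecMulVec νh ν :=
  stmt_3_general ν νh hdot H hH hHν d hinv P hP
end

section
/- Let V be a real Hilbert space, a : V × V → ℝ a symmetric continuous coercive bilinear form with coercivity constant α and continuity constant M, and let ã : V × V → ℝ be another bilinear form with |a(v,w) − ã(v,w)| ≤ ε ‖v‖ ‖w‖ for all v, w, and f, f̃ ∈ V* with u, ũ the respective solutions of a(u,v) = f(v) and ã(ũ,v) = f̃(v) for all v (assuming ã is also coercive). Then ‖u − ũ‖ ≤ (1/α)(ε ‖ũ‖ + ‖f − f̃‖_{V*}). -/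
/-!
Test the coercivity of `a` against the error `e = u - ũ`. Since `a u e = f e` and `ã ũ e = f̃ e`,
`a e e = (f - f̃) e + (ã - a)(ũ, e)`, and both terms are bounded by a multiple of `‖e‖`, so
`α ‖e‖² ≤ (ε ‖ũ‖ + ‖f - f̃‖) ‖e‖`; dividing by `α ‖e‖` gives the estimate.
-/

lemma le_div_of_mul_sq_le_mul {α x C : ℝ} (hα : 0 < α) (hx : 0 ≤ x) (hC : 0 ≤ C)
    (h : α * x ^ 2 ≤ C * x) : x ≤ C / α := by
  rcases hx.eq_or_lt with rfl | hx
  · positivity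
  · rw [le_div_iff₀ hα]
    nlinarith

lemma LinearMap.apply_sub_eq_of_solutions {R E : Type*} [CommRing R] [AddCommGroup E]
    [Module R E] (a a' : E →ₗ[R] E →ₗ[R] R) (f f' : E → R) {u u' : E}
    (hu : ∀ v, a u v = f v) (hu' : ∀ v, a' u' v = f' v) (v : E) :
    a (u - u') v = f v - f' v + (a' u' v - a u' v) := by
  rw [map_sub, LinearMap.sub_apply, hu, hu']
  ring

theorem stmt_15_general (V : Type*) [NormedAddCommGroup V] [InnerProductSpace ℝ V]
    (a a' : V →ₗ[ℝ] V →ₗ[ℝ] ℝ) (α ε : ℝ) (hα : 0 < α) (hε : 0 ≤ ε)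
    (hcoer : ∀ v, α * ‖v‖ ^ 2 ≤ a v v)
    (hpert : ∀ v w, |a v w - a' v w| ≤ ε * ‖v‖ * ‖w‖)
    (f f' : V →L[ℝ] ℝ) (u u' : V)
    (hu : ∀ v, a u v = f v) (hu' : ∀ v, a' u' v = f' v) :
    ‖u - u'‖ ≤ (1 / α) * (ε * ‖u'‖ + ‖f - f'‖) := by
  set e := u - u'
  have hdata : f e - f' e ≤ ‖f - f'‖ * ‖e‖ := ((f - f').le_opNorm e).trans' (le_abs_self _)
  have hform : a' u' e - a u' e ≤ ε * ‖u'‖ * ‖e‖ :=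
    (le_abs_self _).trans ((abs_sub_comm _ _).trans_le (hpert u' e))
  have hbound : α * ‖e‖ ^ 2 ≤ (ε * ‖u'‖ + ‖f - f'‖) * ‖e‖ :=
    calc α * ‖e‖ ^ 2 ≤ a e e := hcoer e
      _ = f e - f' e + (a' u' e - a u' e) := a.apply_sub_eq_of_solutions a' f f' hu hu' e
      _ ≤ (ε * ‖u'‖ + ‖f - f'‖) * ‖e‖ := by linarith
  rw [one_div_mul_eq_div]
  exact le_div_of_mul_sq_le_mul hα (norm_nonneg e) (by positivity) hbound

theorem stmt_15 (V : Type*) [NormedAddCommGroup V] [InnerProductSpace ℝ V] [CompleteSpace V]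
    (a a' : V →ₗ[ℝ] V →ₗ[ℝ] ℝ) (α M ε : ℝ) (hα : 0 < α) (hM : 0 < M) (hε : 0 ≤ ε)
    (hsymm : ∀ v w, a v w = a w v)
    (hcoer : ∀ v, α * ‖v‖ ^ 2 ≤ a v v)
    (hcont : ∀ v w, |a v w| ≤ M * ‖v‖ * ‖w‖)
    (hpert : ∀ v w, |a v w - a' v w| ≤ ε * ‖v‖ * ‖w‖)
    (ha'coer : ∃ α' > 0, ∀ v, α' * ‖v‖ ^ 2 ≤ a' v v)
    (f f' : V →L[ℝ] ℝ) (u u' : V)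
    (hu : ∀ v, a u v = f v) (hu' : ∀ v, a' u' v = f' v) :
    ‖u - u'‖ ≤ (1 / α) * (ε * ‖u'‖ + ‖f - f'‖) :=
  stmt_15_general V a a' α ε hα hε hcoer hpert f f' u u' hu hu'
end
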